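/- Let k be a field and R = RCFM(k). With A the shift matrix and B the matrix with b_{n(n+1)/2+i,(n-1)n/2+i}=1 (n>0, 0≤i<n) and 0 otherwise, one has R = R·(I − B) + A·R, i.e., every row-column-finite matrix decomposes as a sum of an element of the right ideal R(I−B) and an element of the left ideal AR. -/

import Mathlib

open scoped Classical

/-- A matrix is row-column finite if every row and every column has finitely many
nonzero entries. -/
def RCF {k : Type*} [Field k] (M : ℕ → ℕ → k) : Prop :=
  (∀ i, {j | M i j ≠ 0}.Finite) ∧ (∀ j, {i | M i j ≠ 0}.Finite)

/-- The shift matrix `A` over `k`: `a_{i+1,i} = 1` and all other entries `0`. -/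
def shiftA (k : Type*) [Field k] : ℕ → ℕ → k := fun i j => if i = j + 1 then 1 else 0

/-- The matrix `B` over `k`: `b_{n(n+1)/2 + i, (n-1)n/2 + i} = 1` for `n > 0`, `0 ≤ i < n`,
and all other entries `0`. -/
noncomputable def matB (k : Type*) [Field k] : ℕ → ℕ → k := fun p q =>
  if ∃ n : ℕ, 0 < n ∧ ∃ i : ℕ, i < n ∧ p = n * (n + 1) / 2 + i ∧ q = (n - 1) * n / 2 + i
  then 1 else 0

/-- The identity `ℕ×ℕ` matrix over `k`. -/
def idMat (k : Type*) [Field k] : ℕ → ℕ → k := fun i j => if i = j then 1 else 0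

/-- Product of `ℕ×ℕ` matrices, defined entrywise by the (finite) sums. -/
noncomputable def matMul {k : Type*} [Field k] (M N : ℕ → ℕ → k) : ℕ → ℕ → k :=
  fun i j => ∑ᶠ l, M i l * N l j

/-!
Rows `1, 2, …` of `P` are `A·Y` for `Y` the matrix `P` shifted up by one row. Column `q` of `B`
has a single nonzero entry, a `1` in some row `f q > q`, so for a matrix `X` supported on row `0`
the product `X(I − B)` has row `0` equal to `q ↦ X 0 q − X 0 (f q)`. Row `0` of `P` is of this
form with the finitely supported telescoping sum `X 0 q = ∑ₘ P 0 (f^[m] q)`.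
-/

theorem add_le_iterate {f : ℕ → ℕ} (hf : ∀ q, q < f q) (m q : ℕ) : q + m ≤ f^[m] q := by
  induction m with
  | zero => simp
  | succ m ih =>
    rw [Function.iterate_succ_apply']
    have := hf (f^[m] q)
    omega

theorem exists_sub_comp_eq {M : Type*} [AddCommGroup M] {f : ℕ → ℕ} (hf : ∀ q, q < f q)
    {v : ℕ → M} (hv : v.support.Finite) :
    ∃ x : ℕ → M, x.support.Finite ∧ ∀ q, x q - x (f q) = v q := by
  obtain ⟨N, hN⟩ : ∃ N, ∀ q, N ≤ q → v q = 0 := by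
    obtain ⟨b, hb⟩ := hv.bddAbove
    exact ⟨b + 1, fun q hq => Function.notMem_support.mp fun h => by have := hb h; omega⟩
  have hN_iterate (m q : ℕ) (hq : N ≤ q + m) : v (f^[m] q) = 0 :=
    hN _ (hq.trans (add_le_iterate hf m q))
  refine ⟨fun q => ∑ m ∈ Finset.range N, v (f^[m] q), ?_, fun q => ?_⟩
  · refine (Set.finite_lt_nat N).subset fun q hq => ?_
    by_contra! hNq
    rw [Set.mem_ofPred_eq, not_lt] at hNq
    exact hq (Finset.sum_eq_zero fun m _ => hN_iterate m q (by omega))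
  · simp only [← Finset.sum_sub_distrib, ← Function.iterate_succ_apply,
      Finset.sum_range_sub' (fun m => v (f^[m] q))]
    simp [hN_iterate N q (by omega)]

section Matrices

variable {k : Type*} [Field k]

theorem RCF.row_succ {P : ℕ → ℕ → k} (hP : RCF P) : RCF fun i j => P (i + 1) j :=
  ⟨fun i => hP.1 (i + 1), fun j => (hP.2 j).preimage (add_left_injective 1).injOn⟩

theorem rcf_ite_row (r : ℕ) {x : ℕ → k} (hx : x.support.Finite) :
    RCF fun i j => if i = r then x j else 0 := by
  refine ⟨fun i => hx.subset fun j => ?_, fun j => (Set.finite_singleton r).subset fun i => ?_⟩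
  all_goals by_cases hi : i = r <;> simp [hi]

theorem matMul_shiftA_zero (Y : ℕ → ℕ → k) (j : ℕ) : matMul (shiftA k) Y 0 j = 0 :=
  finsum_eq_zero_of_forall_eq_zero fun l => by simp [shiftA]

theorem matMul_shiftA_succ (Y : ℕ → ℕ → k) (i j : ℕ) :
    matMul (shiftA k) Y (i + 1) j = Y i j := by
  rw [matMul, finsum_eq_single _ i fun l hl => by simp [shiftA, Ne.symm hl]]
  simp [shiftA]

theorem matMul_apply_of_col_eq_sub {M N : ℕ → ℕ → k} {i j a b : ℕ} (hab : a ≠ b)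
    (hN : ∀ l, N l j = (if l = a then 1 else 0) - if l = b then 1 else 0) :
    matMul M N i j = M i a - M i b := by
  have hsupp : (Function.support fun l => M i l * N l j) ⊆ ({a, b} : Finset ℕ) := by
    intro l hl
    by_contra h
    simp_all
  rw [matMul, finsum_eq_finsetSum_of_support_subset _ hsupp, Finset.sum_pair hab]
  simp [hN, hab, hab.symm, sub_eq_add_neg]

end Matrices

def triangle (n : ℕ) : ℕ := n * (n + 1) / 2

theorem triangle_succ (n : ℕ) : triangle (n + 1) = triangle n + (n + 1) := by
  rw [triangle, triangle, show (n + 1) * (n + 1 + 1) = n * (n + 1) + (n + 1) * 2 by ring,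
    Nat.add_mul_div_right _ _ two_pos]

theorem triangle_strictMono : StrictMono triangle :=
  strictMono_nat_of_lt_succ fun n => by rw [triangle_succ]; omega

theorem exists_lt_triangle_succ (q : ℕ) : ∃ n, q < triangle (n + 1) :=
  ⟨q, by rw [triangle_succ]; omega⟩

/-- The `n` with `triangle n ≤ q < triangle (n + 1)`. -/
noncomputable def triangleBlock (q : ℕ) : ℕ := Nat.find (exists_lt_triangle_succ q)

theorem lt_triangle_triangleBlock_succ (q : ℕ) : q < triangle (triangleBlock q + 1) :=
  Nat.find_spec (exists_lt_triangle_succ q)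

theorem triangle_triangleBlock_le (q : ℕ) : triangle (triangleBlock q) ≤ q := by
  rcases h : triangleBlock q with _ | n
  · simp [triangle]
  · exact not_lt.mp (Nat.find_min (exists_lt_triangle_succ q) (show n < triangleBlock q by omega))

theorem triangleBlock_eq {n q : ℕ} (h₁ : triangle n ≤ q) (h₂ : q < triangle (n + 1)) :
    triangleBlock q = n := by
  have := triangle_strictMono.lt_iff_lt.mp (h₁.trans_lt (lt_triangle_triangleBlock_succ q))
  have := triangle_strictMono.lt_iff_lt.mp ((triangle_triangleBlock_le q).trans_lt h₂)
  omega

/-- The row of the unique nonzero entry of column `q` of `matB`. -/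
noncomputable def matBRow (q : ℕ) : ℕ := q + triangleBlock q + 1

theorem lt_matBRow (q : ℕ) : q < matBRow q := by
  unfold matBRow; omega

theorem matB_apply (k : Type*) [Field k] (p q : ℕ) :
    matB k p q = if p = matBRow q then 1 else 0 := by
  refine if_congr ⟨?_, fun hp => ?_⟩ rfl rfl
  · rintro ⟨_ | m, hm, i, hi, rfl, rfl⟩
    · omega
    have hblock : triangleBlock (triangle m + i) = m :=
      triangleBlock_eq (by omega) (by rw [triangle_succ]; omega)
    change triangle (m + 1) + i = matBRow (triangle m + i)
    rw [matBRow, hblock, triangle_succ]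
    omega
  · have h₁ := triangle_triangleBlock_le q
    have h₂ := lt_triangle_triangleBlock_succ q
    rw [triangle_succ] at h₂
    refine ⟨triangleBlock q + 1, by omega, q - triangle (triangleBlock q), by omega, ?_, ?_⟩
    · change p = triangle (triangleBlock q + 1) + _
      rw [hp, matBRow, triangle_succ]
      omega
    · change q = triangle (triangleBlock q) + _
      omega

theorem matMul_idMat_sub_matB_apply {k : Type*} [Field k] (X : ℕ → ℕ → k) (i j : ℕ) :
    matMul X (idMat k - matB k) i j = X i j - X i (matBRow j) :=
  matMul_apply_of_col_eq_sub (lt_matBRow j).ne fun l => by simp [idMat, matB_apply]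

/-- `RCFM(k) = RCFM(k)·(I−B) + A·RCFM(k)`: every row-column-finite matrix is a sum of an
element of the right ideal `R(I−B)` and an element of the left ideal `AR`. -/
theorem RCFM_eq_right_ideal_add_left_ideal (k : Type*) [Field k] :
    ∀ P : ℕ → ℕ → k, RCF P →
      ∃ X Y : ℕ → ℕ → k, RCF X ∧ RCF Y ∧
        P = matMul X (idMat k - matB k) + matMul (shiftA k) Y := by
  intro P hP
  obtain ⟨x, hx_fin, hx⟩ := exists_sub_comp_eq lt_matBRow (hP.1 0)
  refine ⟨fun i j => if i = 0 then x j else 0, fun i j => P (i + 1) j,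
    rcf_ite_row 0 hx_fin, hP.row_succ, funext fun i => funext fun j => ?_⟩
  rcases i with _ | i <;>
    simp [matMul_idMat_sub_matB_apply, matMul_shiftA_zero, matMul_shiftA_succ, hx]
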